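/- Let v₁ = (x, 1−2x−y), v₂ = (0, −1+4x), v₃ = (−x, y), v₄ = (1−4y, 0), v₅ = (−1+x+2y, −y) be the basis of RT₁⁰, and write v_i = (v_i^x, v_i^y). Let the six nodes be X₁ = (1/2, 0), X₂ = (1, 0), X₃ = (1/2, 1/2), X₄ = (0, 1), X₅ = (0, 1/2), X₆ = (0, 0), with X_j = (x_j, y_j). Define F_{ji} = ∫₀^{x_j} v_i^x(s, 0) ds + ∫₀^{y_j} v_i^y(x_j, t) dt for 1 ≤ j ≤ 6 and 1 ≤ i ≤ 5. Then the 6×6 matrix whose (j,i) entry is F_{ji} for i ≤ 5 and whose sixth column consists entirely of ones is singular (its determinant is zero). -/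

import Mathlib

open MeasureTheory intervalIntegral

/-- First components of the basis fields `v₁ = (x, 1−2x−y)`, `v₂ = (0, −1+4x)`,
`v₃ = (−x, y)`, `v₄ = (1−4y, 0)`, `v₅ = (−1+x+2y, −y)` of `RT₁⁰`. -/
noncomputable def rt1vx : Fin 5 → ℝ → ℝ → ℝ :=
  ![fun x _ => x, fun _ _ => 0, fun x _ => -x, fun _ y => 1 - 4 * y, fun x y => -1 + x + 2 * y]

/-- Second components of the basis fields of `RT₁⁰`. -/
noncomputable def rt1vy : Fin 5 → ℝ → ℝ → ℝ :=
  ![fun x y => 1 - 2 * x - y, fun x _ => -1 + 4 * x, fun _ y => y, fun _ _ => 0, fun _ y => -y]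

/-- The six nodes `X₁ = (1/2,0)`, `X₂ = (1,0)`, `X₃ = (1/2,1/2)`, `X₄ = (0,1)`,
`X₅ = (0,1/2)`, `X₆ = (0,0)`. -/
noncomputable def rt1Nodes : Fin 6 → ℝ × ℝ :=
  ![(1/2, 0), (1, 0), (1/2, 1/2), (0, 1), (0, 1/2), (0, 0)]

/-- `F_{ji} = ∫₀^{x_j} v_i^x(s,0) ds + ∫₀^{y_j} v_i^y(x_j,t) dt`, the integral along the
two-section path `(0,0) → (x_j,0) → (x_j,y_j)` (potential `φ = 0`, `D = 1`). -/
noncomputable def rt1F (j : Fin 6) (i : Fin 5) : ℝ :=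
  (∫ s in (0:ℝ)..(rt1Nodes j).1, rt1vx i s 0) +
    ∫ t in (0:ℝ)..(rt1Nodes j).2, rt1vy i (rt1Nodes j).1 t

/-!
The field `v₃ + v₄ + v₅ = (−2y, 0)` has no `y`-component and an `x`-component vanishing on the
axis `y = 0`, so its integral along every two-section path `(0,0) → (x_j,0) → (x_j,y_j)` is
zero. Hence columns 3, 4, 5 of the matrix sum to zero and `(0,0,1,1,1,0)` lies in its kernel.
-/

lemma intervalIntegral.integral_add_add_eq_zero {f g h : ℝ → ℝ} {a b : ℝ}
    (hf : IntervalIntegrable f volume a b) (hg : IntervalIntegrable g volume a b)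
    (hh : IntervalIntegrable h volume a b) (hsum : ∀ x, f x + g x + h x = 0) :
    (∫ x in a..b, f x) + (∫ x in a..b, g x) + ∫ x in a..b, h x = 0 := by
  rw [← integral_add hf hg, ← integral_add (hf.add hg) hh]
  simp [hsum]

lemma continuous_rt1vx (i : Fin 5) (y : ℝ) : Continuous fun x => rt1vx i x y := by
  fin_cases i <;>
    simp only [rt1vx, Fin.zero_eta, Fin.mk_one, Fin.reduceFinMk, Matrix.cons_val,
      Matrix.cons_val_zero, Matrix.cons_val_one] <;> fun_prop

lemma continuous_rt1vy (i : Fin 5) (x : ℝ) : Continuous fun y => rt1vy i x y := by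
  fin_cases i <;>
    simp only [rt1vy, Fin.zero_eta, Fin.mk_one, Fin.reduceFinMk, Matrix.cons_val,
      Matrix.cons_val_zero, Matrix.cons_val_one] <;> fun_prop

lemma rt1vx_two_add_three_add_four (x : ℝ) : rt1vx 2 x 0 + rt1vx 3 x 0 + rt1vx 4 x 0 = 0 := by
  simp [rt1vx]

lemma rt1vy_two_add_three_add_four (x y : ℝ) : rt1vy 2 x y + rt1vy 3 x y + rt1vy 4 x y = 0 := by
  simp [rt1vy]

lemma rt1F_two_add_three_add_four (j : Fin 6) : rt1F j 2 + rt1F j 3 + rt1F j 4 = 0 := by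
  have hx := integral_add_add_eq_zero (a := 0) (b := (rt1Nodes j).1)
    ((continuous_rt1vx 2 0).intervalIntegrable _ _) ((continuous_rt1vx 3 0).intervalIntegrable _ _)
    ((continuous_rt1vx 4 0).intervalIntegrable _ _) rt1vx_two_add_three_add_four
  have hy := integral_add_add_eq_zero (a := 0) (b := (rt1Nodes j).2)
    ((continuous_rt1vy 2 _).intervalIntegrable _ _) ((continuous_rt1vy 3 _).intervalIntegrable _ _)
    ((continuous_rt1vy 4 _).intervalIntegrable _ _) (rt1vy_two_add_three_add_four (rt1Nodes j).1)
  simp only [rt1F]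
  linear_combination hx + hy

/-- The 6×6 matrix whose `(j,i)` entry is `F_{ji}` for `i ≤ 5` and whose sixth column is
all ones is singular: its determinant is zero. -/
theorem rt1_interpolation_matrix_singular :
    Matrix.det (Matrix.of fun j i : Fin 6 =>
      if h : (i : ℕ) < 5 then rt1F j ⟨(i : ℕ), h⟩ else 1) = 0 := by
  rw [← Matrix.exists_mulVec_eq_zero_iff]
  refine ⟨![0, 0, 1, 1, 1, 0], fun h => by simpa using congrFun h 2, ?_⟩
  funext j
  simpa [Matrix.mulVec, dotProduct, Fin.sum_univ_six, add_assoc]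
    using rt1F_two_add_three_add_four j
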